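/- For k ≥ 3, every strictly balanced word w of length 2k over {a,b} with w ∉ {a^k b^k, b^k a^k} satisfies |ScatFact_k(w)| ≥ k + 3. -/

import Mathlib

def wa : Bool := false
def wb : Bool := true

/-- The set of scattered factors (subsequences) of `w` of length exactly `k`. -/
def ScatFact (k : ℕ) (w : List Bool) : Finset (List Bool) :=
  (w.sublists.filter (fun u => u.length = k)).toFinset

/-! Sort the scattered factors of length `k` by their number of letters `b`. Since `w` has `k`
letters of each kind, every count `j ≤ k` occurs, giving `k + 1` factors, and the classes
`j = 1` and `j = k - 1` (distinct as `k ≥ 3`) contribute one more each. A word `aⁱ b aᵏ⁻¹⁻ⁱ` is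
a scattered factor as soon as some `b` of `w` has at least `i` letters `a` before it and
`k - 1 - i` after it. If the first `b` has `p` letters `a` before it, then `p < k` (otherwise
`w = aᵏbᵏ`), and `0 < p` gives `i = p - 1` and `i = p`; symmetrically for the last `b`; if the
first `b` has no `a` before it and the last `b` none after it, they give `i = 0` and `i = k - 1`.
The class `j = k - 1` is the same argument with `a` and `b` exchanged. -/

open List Finset

lemma mem_scatFact {k : ℕ} {w u : List Bool} : u ∈ ScatFact k w ↔ u <+ w ∧ u.length = k := by
  simp [ScatFact]

lemma exists_mem_scatFact_count_eq {k j : ℕ} {w : List Bool} (c : Bool) (hjk : j ≤ k)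
    (hc : j ≤ w.count c) (hnc : k - j ≤ w.count (!c)) : ∃ u ∈ ScatFact k w, u.count c = j := by
  have hsub : replicate j c ++ replicate (k - j) (!c) <+~ w := by
    refine subperm_ext_iff.2 fun x _ => ?_
    cases x <;> cases c <;> simp only [Bool.not_true, Bool.not_false] at hnc ⊢ <;>
      simp [count_replicate] <;> omega
  obtain ⟨u, hperm, hu⟩ := hsub
  refine ⟨u, mem_scatFact.2 ⟨hu, ?_⟩, ?_⟩
  · simp [hperm.length_eq]
    omega
  · simp [hperm.count_eq, count_replicate]

lemma card_scatFact_eq_sum_card_filter_count (k : ℕ) (w : List Bool) (c : Bool) :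
    #(ScatFact k w) = ∑ j ∈ Finset.range (k + 1), #{u ∈ ScatFact k w | u.count c = j} := by
  refine card_eq_sum_card_fiberwise fun u hu => ?_
  simp only [mem_coe, mem_scatFact] at hu
  simpa [Nat.lt_succ_iff, ← hu.2] using count_le_length

lemma filter_count_not_eq_one_eq (c : Bool) {n : ℕ} (hn : 0 < n) (w : List Bool) :
    {u ∈ ScatFact n w | u.count (!c) = 1} = {u ∈ ScatFact n w | u.count c = n - 1} := by
  refine filter_congr fun u hu => ?_
  have := count_add_count_not u c
  rw [(mem_scatFact.1 hu).2] at this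
  omega

lemma eq_replicate_of_count_not_eq_zero {c : Bool} {y : List Bool} (h : y.count (!c) = 0) :
    y = replicate (y.count c) c := by
  have hlen : y.count c = y.length := by
    have := count_add_count_not y c
    omega
  exact eq_replicate_iff.2 ⟨hlen.symm, fun b hb => (count_eq_length.1 hlen b hb).symm⟩

lemma exists_eq_replicate_append_cons {c : Bool} {w : List Bool} (h : (!c) ∈ w) :
    ∃ p y, w = replicate p c ++ (!c) :: y := by
  induction w with
  | nil => simp at h
  | cons e t ih =>
    by_cases he : e = c
    · obtain ⟨p, y, rfl⟩ := ih (by simpa [he] using h)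
      exact ⟨p + 1, y, by simp [he, replicate_succ]⟩
    · exact ⟨0, t, by simp [Bool.eq_not_of_ne he]⟩

lemma exists_eq_append_cons_replicate {c : Bool} {w : List Bool} (h : (!c) ∈ w) :
    ∃ x r, w = x ++ (!c) :: replicate r c := by
  obtain ⟨r, y, hw⟩ := exists_eq_replicate_append_cons (mem_reverse.2 h)
  exact ⟨y.reverse, r, by simpa using congrArg reverse hw⟩

lemma lt_count_of_eq_replicate_append_cons {c : Bool} {w y : List Bool} {p : ℕ}
    (hw : w = replicate p c ++ (!c) :: y)
    (h : w ≠ replicate (w.count c) c ++ replicate (w.count (!c)) (!c)) :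
    p < w.count c := by
  subst hw
  have hcount : (replicate p c ++ (!c) :: y).count c = p + y.count c := by simp
  refine lt_of_le_of_ne (by omega) fun hp => h ?_
  have hy : y = replicate (y.count (!c)) (!c) :=
    eq_replicate_of_count_not_eq_zero (by rw [Bool.not_not]; omega)
  rw [← hp, hy]
  simp [count_replicate, replicate_succ]

lemma lt_count_of_eq_append_cons_replicate {c : Bool} {w x : List Bool} {r : ℕ}
    (hw : w = x ++ (!c) :: replicate r c)
    (h : w ≠ replicate (w.count (!c)) (!c) ++ replicate (w.count c) c) :
    r < w.count c := by
  rw [← count_reverse]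
  refine lt_count_of_eq_replicate_append_cons (y := x.reverse) (by simp [hw]) ?_
  rwa [count_reverse, count_reverse, ne_eq, ← reverse_inj, reverse_reverse, reverse_append,
    reverse_replicate, reverse_replicate]

lemma replicate_append_cons_sublist {α : Type*} [BEq α] [LawfulBEq α] {c d : α}
    {x y : List α} {i j : ℕ} (hi : i ≤ x.count c) (hj : j ≤ y.count c) :
    replicate i c ++ d :: replicate j c <+ x ++ d :: y :=
  (replicate_sublist_iff.2 hi).append ((replicate_sublist_iff.2 hj).cons_cons d)

lemma eq_of_replicate_append_cons_eq {α : Type*} [BEq α] [LawfulBEq α] {c d : α} (hcd : c ≠ d)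
    {i i' : ℕ} {r r' : List α} (h : replicate i c ++ d :: r = replicate i' c ++ d :: r') :
    i = i' := by
  have hd : ∀ n, d ∉ replicate n c := fun n hn => hcd (eq_of_mem_replicate hn).symm
  simpa [idxOf_append_of_notMem (hd _)] using congrArg (idxOf d) h

lemma exists_two_replicate_append_cons_sublist {c : Bool} {n : ℕ} (hn : 2 ≤ n) {w : List Bool}
    (hc : w.count c = n) (h₁ : w ≠ replicate n c ++ replicate (w.count (!c)) (!c))
    (h₂ : w ≠ replicate (w.count (!c)) (!c) ++ replicate n c) :
    ∃ i₁ i₂, i₁ < i₂ ∧ i₂ < n ∧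
      replicate i₁ c ++ (!c) :: replicate (n - 1 - i₁) c <+ w ∧
      replicate i₂ c ++ (!c) :: replicate (n - 1 - i₂) c <+ w := by
  have hmem : (!c) ∈ w := by
    by_contra hnot
    apply h₁
    rw [count_eq_zero.2 hnot, replicate_zero, append_nil, ← hc]
    exact eq_replicate_of_count_not_eq_zero (count_eq_zero.2 hnot)
  obtain ⟨p, y, hw⟩ := exists_eq_replicate_append_cons hmem
  obtain ⟨x, r, hw'⟩ := exists_eq_append_cons_replicate hmem
  have hp : p < n := hc ▸ lt_count_of_eq_replicate_append_cons hw (hc ▸ h₁)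
  have hr : r < n := hc ▸ lt_count_of_eq_append_cons_replicate hw' (hc ▸ h₂)
  have hy : y.count c = n - p := by
    simp [hw] at hc
    omega
  have hx : x.count c = n - r := by
    simp [hw'] at hc
    omega
  rcases Nat.eq_zero_or_pos p with rfl | hp₀
  · rcases Nat.eq_zero_or_pos r with rfl | hr₀
    · exact ⟨0, n - 1, by omega, by omega,
        hw ▸ replicate_append_cons_sublist (by simp) (by omega),
        hw' ▸ replicate_append_cons_sublist (by omega) (by simp)⟩
    · exact ⟨n - 1 - r, n - r, by omega, by omega,
        hw' ▸ replicate_append_cons_sublist (by omega) (by simp; omega),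
        hw' ▸ replicate_append_cons_sublist (by omega) (by simp; omega)⟩
  · exact ⟨p - 1, p, by omega, hp,
      hw ▸ replicate_append_cons_sublist (by simp) (by omega),
      hw ▸ replicate_append_cons_sublist (by simp) (by omega)⟩

lemma two_le_card_filter_count_not_eq_one {c : Bool} {n : ℕ} (hn : 2 ≤ n) {w : List Bool}
    (hc : w.count c = n) (h₁ : w ≠ replicate n c ++ replicate (w.count (!c)) (!c))
    (h₂ : w ≠ replicate (w.count (!c)) (!c) ++ replicate n c) :
    2 ≤ #{u ∈ ScatFact n w | u.count (!c) = 1} := by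
  obtain ⟨i₁, i₂, hi, hi₂, hs₁, hs₂⟩ := exists_two_replicate_append_cons_sublist hn hc h₁ h₂
  have hmem : ∀ i < n, replicate i c ++ (!c) :: replicate (n - 1 - i) c <+ w →
      replicate i c ++ (!c) :: replicate (n - 1 - i) c ∈
        {u ∈ ScatFact n w | u.count (!c) = 1} := by
    intro i hin hs
    simp [mem_scatFact, hs, count_replicate]
    omega
  exact one_lt_card.2 ⟨_, hmem i₁ (by omega) hs₁, _, hmem i₂ hi₂ hs₂,
    fun h => hi.ne (eq_of_replicate_append_cons_eq (by simp) h)⟩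

theorem scatfact_card_ge_general (k : ℕ) (hk : 3 ≤ k) (w : List Bool)
    (ha : w.count wa = k) (hb : w.count wb = k)
    (h1 : w ≠ List.replicate k wa ++ List.replicate k wb)
    (h2 : w ≠ List.replicate k wb ++ List.replicate k wa) :
    k + 3 ≤ (ScatFact k w).card := by
  have hwb : wb = !wa := rfl
  have hwa : wa = !wb := rfl
  have hfiber : ∀ j ∈ Finset.range (k + 1),
      1 + (if j = 1 then 1 else 0) + (if j = k - 1 then 1 else 0) ≤
        #{u ∈ ScatFact k w | u.count wb = j} := by
    intro j hj
    rw [Finset.mem_range] at hj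
    split_ifs with hj₁ hj₂ hj₂
    · omega
    · subst hj₁
      exact two_le_card_filter_count_not_eq_one (by omega) ha (by rwa [← hwb, hb])
        (by rwa [← hwb, hb])
    · rw [hj₂, ← filter_count_not_eq_one_eq wb (by omega)]
      exact two_le_card_filter_count_not_eq_one (by omega) hb (by rwa [← hwa, ha])
        (by rwa [← hwa, ha])
    · obtain ⟨u, hu, hcount⟩ := exists_mem_scatFact_count_eq (k := k) (j := j) (w := w) wb (by omega) (by omega)
        (by rw [← hwa]; omega)
      exact card_pos.2 ⟨u, mem_filter.2 ⟨hu, hcount⟩⟩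
  calc k + 3 = ∑ j ∈ Finset.range (k + 1),
        (1 + (if j = 1 then 1 else 0) + (if j = k - 1 then 1 else 0)) := by
        simp [sum_add_distrib, sum_ite_eq', show 0 < k by omega]
    _ ≤ ∑ j ∈ Finset.range (k + 1), #{u ∈ ScatFact k w | u.count wb = j} := Finset.sum_le_sum hfiber
    _ = #(ScatFact k w) := (card_scatFact_eq_sum_card_filter_count k w wb).symm

theorem scatfact_card_ge (k : ℕ) (hk : 3 ≤ k) (w : List Bool)
    (hlen : w.length = 2 * k) (ha : w.count wa = k) (hb : w.count wb = k)
    (h1 : w ≠ List.replicate k wa ++ List.replicate k wb)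
    (h2 : w ≠ List.replicate k wb ++ List.replicate k wa) :
    k + 3 ≤ (ScatFact k w).card :=
  scatfact_card_ge_general k hk w ha hb h1 h2
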